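/- arXiv:2203.03075 — 4 statements merged into one kernel-verified Lean document; each statement's English description precedes it below -/
import Mathlib

section
/- Let n ≥ 2 be even and let s ∈ {-1,1}^n (a vector in ℝ^n with all entries ±1). Then the sum of all vectors d ∈ {-1,1}^n satisfying dᵀs ≥ 0 equals C(n-1, n/2) · s, where C(·,·) denotes the binomial coefficient. -/
/-
Encode `s` and `d` as Boolean vectors; then `dᵀs = n - 2 h(d, s)` with `h` the Hamming distance, so
the sum runs over the Hamming ball of radius `n / 2` around `s`. Split off the `i`-th coordinate:
if `r` is the rest of `d` and `h = h(r, s)`, the choice `dᵢ = sᵢ` contributes `sᵢ` when `2h ≤ n`,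
and `dᵢ = -sᵢ` contributes `-sᵢ` when `2h + 2 ≤ n`. These cancel unless `h = n / 2`, and there are
`C(n - 1, n / 2)` such `r`.
-/

/-- The ±1 vector in `ℝ^n` associated with a Boolean sign pattern. -/
def pmVec (n : ℕ) (ε : Fin n → Bool) : Fin n → ℝ := fun i => if ε i then 1 else -1

open Finset

section Hamming

variable {ι : Type*} [Fintype ι] [DecidableEq ι]

lemma hammingDist_funSplitAt_symm {β : Type*} [DecidableEq β] (i : ι) (b : β)
    (r : {j // j ≠ i} → β) (y : ι → β) :
    hammingDist ((Equiv.funSplitAt i β).symm (b, r)) y =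
      (if b = y i then 0 else 1) + hammingDist r (fun j ↦ y j) := by
  simp only [hammingDist, card_filter, ite_not]
  rw [Fintype.sum_eq_add_sum_subtype_ne _ i]
  simp only [Equiv.funSplitAt_symm_apply, dite_true]
  congr 1
  exact Fintype.sum_congr _ _ fun j ↦ by simp [j.2]

lemma card_filter_hammingDist_eq (y : ι → Bool) (m : ℕ) :
    #{x | hammingDist x y = m} = (Fintype.card ι).choose m := by
  rw [← card_univ, ← card_powersetCard]
  refine card_nbij' (fun x ↦ ({j | x j ≠ y j} : Finset ι))
    (fun T j ↦ if j ∈ T then !y j else y j) ?_ ?_ ?_ ?_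
  · intro x
    simp [hammingDist]
  · intro T hT
    simp_all [hammingDist]
  · intro x _
    funext j
    cases hx : x j <;> cases y j <;> simp [hx]
  · intro T _
    ext j
    by_cases h : j ∈ T <;> simp [h]

end Hamming

lemma sum_pmVec_mul_pmVec {n : ℕ} (ε σ : Fin n → Bool) :
    ∑ j, pmVec n ε j * pmVec n σ j = n - 2 * hammingDist ε σ := by
  have h (j : Fin n) : pmVec n ε j * pmVec n σ j = 1 - 2 * if ε j ≠ σ j then 1 else 0 := by
    unfold pmVec; cases ε j <;> cases σ j <;> norm_num
  simp only [h, sum_sub_distrib, ← mul_sum, sum_boole, hammingDist]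
  simp

lemma zero_le_sum_pmVec_mul_pmVec_iff {n : ℕ} (ε σ : Fin n → Bool) :
    0 ≤ ∑ j, pmVec n ε j * pmVec n σ j ↔ 2 * hammingDist ε σ ≤ n := by
  rw [sum_pmVec_mul_pmVec, sub_nonneg]
  norm_cast

lemma sum_hammingBall_pmVec_apply {n : ℕ} (σ : Fin n → Bool) (i : Fin n) :
    ∑ ε with 2 * hammingDist ε σ ≤ n, pmVec n ε i = (n - 1).choose (n / 2) * pmVec n σ i := by
  have window (h : ℕ) : ((if 2 * h ≤ n then 1 else 0) - if 2 * (1 + h) ≤ n then 1 else 0 : ℝ) =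
      if h = n / 2 then 1 else 0 := by
    split_ifs <;> first | omega | norm_num
  rw [sum_filter, ← (Equiv.funSplitAt i Bool).symm.sum_comp, Fintype.sum_prod_type_right]
  simp only [hammingDist_funSplitAt_symm, Fintype.sum_bool]
  calc _ = ∑ r : {j // j ≠ i} → Bool,
        (if hammingDist r (fun j ↦ σ j) = n / 2 then 1 else 0) * pmVec n σ i := by
        refine Fintype.sum_congr _ _ fun r ↦ ?_
        rw [← window]
        unfold pmVec
        cases σ i <;> simp <;> split_ifs <;> norm_num
    _ = _ := by
      rw [← sum_mul, sum_boole, card_filter_hammingDist_eq]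
      simp

theorem sum_signvectors_nonneg_side_even_general
    (n : ℕ)
    (s : Fin n → ℝ) (hs : ∀ i, s i = 1 ∨ s i = -1) :
    (∑ ε ∈ Finset.univ.filter
        (fun ε : Fin n → Bool => 0 ≤ ∑ i, pmVec n ε i * s i),
      pmVec n ε) = ((n - 1).choose (n / 2) : ℝ) • s := by
  obtain ⟨σ, rfl⟩ : ∃ σ, s = pmVec n σ :=
    ⟨fun j ↦ s j = 1, funext fun j ↦ by rcases hs j with h | h <;> simp [pmVec, h]⟩
  ext i
  simp only [zero_le_sum_pmVec_mul_pmVec_iff, Finset.sum_apply, sum_hammingBall_pmVec_apply,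
    Pi.smul_apply, smul_eq_mul]

/-- For even `n ≥ 2` and a sign vector `s ∈ {-1,1}^n`, the sum of all
`d ∈ {-1,1}^n` with `dᵀs ≥ 0` equals `C(n-1, n/2) • s`. -/
theorem sum_signvectors_nonneg_side_even
    (n : ℕ) (hn : 2 ≤ n) (hne : Even n)
    (s : Fin n → ℝ) (hs : ∀ i, s i = 1 ∨ s i = -1) :
    (∑ ε ∈ Finset.univ.filter
        (fun ε : Fin n → Bool => 0 ≤ ∑ i, pmVec n ε i * s i),
      pmVec n ε) = ((n - 1).choose (n / 2) : ℝ) • s :=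
  sum_signvectors_nonneg_side_even_general n s hs
end

section
/- Let n ≥ 1 be odd and let s ∈ {-1,1}^n (a vector in ℝ^n with all entries ±1). Then the sum of all vectors d ∈ {-1,1}^n satisfying dᵀs ≥ 0 equals C(n-1, (n-1)/2) · s, where C(·,·) denotes the binomial coefficient. -/
/-!
Multiplying coordinatewise by `s` permutes `{-1,1}^n`, so it suffices to take `s = (1,…,1)`.
Write `n = 2m + 1` and identify `d` with the set `S` of its `+1` coordinates; then `dᵀs ≥ 0`
means `|S| > m`, and coordinate `i` of the sum is `∑_{|S| > m} (±1 according as i ∈ S)`.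
Pairing each `T ∌ i` with `insert i T`, the pair contributes `[|T| + 1 > m] - [|T| > m]`,
which is `1` exactly when `|T| = m`; there are `C(2m, m)` such `T`.
-/

open Finset

theorem sum_filter_lt_card_ite_mem {ι R : Type*} [Fintype ι] [DecidableEq ι]
    [AddCommGroupWithOne R] (i : ι) (k : ℕ) :
    ∑ S ∈ (univ : Finset (Finset ι)).filter (fun S => k < #S), (if i ∈ S then (1 : R) else -1)
      = (Fintype.card ι - 1).choose k := by
  rw [sum_filter, ← powerset_univ, ← insert_erase (mem_univ i),
    sum_powerset_insert (notMem_erase i univ), ← sum_add_distrib]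
  have hterm : ∀ S ∈ (univ.erase i).powerset,
      ((if k < #S then (if i ∈ S then (1 : R) else -1) else 0)
        + if k < #(insert i S) then (if i ∈ insert i S then 1 else -1) else 0)
        = if #S = k then 1 else 0 := by
    intro S hS
    have hiS : i ∉ S := fun h => notMem_erase i univ (mem_powerset.1 hS h)
    rw [card_insert_of_notMem hiS, if_pos (mem_insert_self i S), if_neg hiS]
    split_ifs <;> first | omega | abel
  rw [sum_congr rfl hterm, sum_boole, ← powersetCard_eq_filter, card_powersetCard,
    card_erase_of_mem (mem_univ i), card_univ]

theorem pmVec_beq_apply {n : ℕ} (ε σ : Fin n → Bool) (i : Fin n) :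
    pmVec n (fun j => ε j == σ j) i = pmVec n ε i * pmVec n σ i := by
  cases hε : ε i <;> cases hσ : σ i <;> simp [pmVec, hε, hσ]

theorem pmVec_mul_self_apply {n : ℕ} (σ : Fin n → Bool) (i : Fin n) :
    pmVec n σ i * pmVec n σ i = 1 := by
  unfold pmVec; split_ifs <;> norm_num

theorem exists_pmVec_eq {n : ℕ} {s : Fin n → ℝ} (hs : ∀ i, s i = 1 ∨ s i = -1) :
    ∃ σ, pmVec n σ = s := by
  refine ⟨fun i => s i = 1, funext fun i => ?_⟩
  rcases hs i with h | h <;> norm_num [pmVec, h]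

theorem sum_pmVec {n : ℕ} (ε : Fin n → Bool) :
    ∑ i, pmVec n ε i = 2 * #(univ.filter fun i => ε i) - n := by
  have h : ∀ i, pmVec n ε i = 2 * (if ε i then 1 else 0) - 1 := fun i => by
    unfold pmVec; split_ifs <;> norm_num
  simp only [h, sum_sub_distrib, ← mul_sum, sum_boole, sum_const, card_univ, Fintype.card_fin,
    nsmul_eq_mul, mul_one]

theorem zero_le_sum_pmVec_iff {m : ℕ} (ε : Fin (2 * m + 1) → Bool) :
    0 ≤ ∑ i, pmVec _ ε i ↔ m < #(univ.filter fun i => ε i) := by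
  rw [sum_pmVec, sub_nonneg]
  exact_mod_cast (by omega : 2 * m + 1 ≤ 2 * #(univ.filter fun i => ε i) ↔ _)

theorem sum_filter_pmVec_apply (m : ℕ) (i : Fin (2 * m + 1)) :
    ∑ ε ∈ univ.filter (fun ε => 0 ≤ ∑ j, pmVec _ ε j), pmVec _ ε i = (2 * m).choose m := by
  calc ∑ ε ∈ univ.filter (fun ε => 0 ≤ ∑ j, pmVec _ ε j), pmVec _ ε i
      = ∑ S ∈ (univ : Finset (Finset (Fin (2 * m + 1)))).filter (fun S => m < #S),
          (if i ∈ S then (1 : ℝ) else -1) := by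
        refine sum_nbij' (fun ε => univ.filter fun j => ε j) (fun S j => j ∈ S) ?_ ?_ ?_ ?_ ?_
        · intro ε hε
          simpa [zero_le_sum_pmVec_iff] using hε
        · intro S hS
          simpa [zero_le_sum_pmVec_iff] using hS
        · intro ε _; funext j; simp
        · intro S _; ext j; simp
        · intro ε _; simp [pmVec]
    _ = (2 * m).choose m := by
        rw [sum_filter_lt_card_ite_mem, Fintype.card_fin, Nat.add_sub_cancel]

theorem sum_filter_pmVec_mul {n : ℕ} (σ : Fin n → Bool) :
    ∑ ε ∈ univ.filter (fun ε => 0 ≤ ∑ i, pmVec n ε i * pmVec n σ i), pmVec n ε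
      = (∑ ε ∈ univ.filter (fun ε => 0 ≤ ∑ i, pmVec n ε i), pmVec n ε) * pmVec n σ := by
  rw [sum_mul]
  have hinv : ∀ ε : Fin n → Bool, (fun j => (ε j == σ j) == σ j) = ε := fun ε => by
    funext j; cases ε j <;> cases σ j <;> rfl
  refine sum_nbij' (fun ε j => ε j == σ j) (fun ε j => ε j == σ j) ?_ ?_
    (fun ε _ => hinv ε) (fun ε _ => hinv ε) ?_
  · intro ε hε
    simpa [pmVec_beq_apply] using hε
  · intro ε hε
    simpa [pmVec_beq_apply, mul_assoc, pmVec_mul_self_apply] using hε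
  · intro ε _
    funext i
    simp [pmVec_beq_apply, mul_assoc, pmVec_mul_self_apply]

theorem sum_signvectors_nonneg_side_odd_general
    (n : ℕ) (hno : Odd n)
    (s : Fin n → ℝ) (hs : ∀ i, s i = 1 ∨ s i = -1) :
    (∑ ε ∈ Finset.univ.filter
        (fun ε : Fin n → Bool => 0 ≤ ∑ i, pmVec n ε i * s i),
      pmVec n ε) = ((n - 1).choose ((n - 1) / 2) : ℝ) • s := by
  obtain ⟨m, rfl⟩ := hno
  obtain ⟨σ, rfl⟩ := exists_pmVec_eq hs
  rw [sum_filter_pmVec_mul]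
  funext i
  rw [Pi.mul_apply, Finset.sum_apply, sum_filter_pmVec_apply, Pi.smul_apply, smul_eq_mul,
    Nat.add_sub_cancel, Nat.mul_div_cancel_left m two_pos]

/-- For odd `n ≥ 1` and a sign vector `s ∈ {-1,1}^n`, the sum of all
`d ∈ {-1,1}^n` with `dᵀs ≥ 0` equals `C(n-1, (n-1)/2) • s`. -/
theorem sum_signvectors_nonneg_side_odd
    (n : ℕ) (hn : 1 ≤ n) (hno : Odd n)
    (s : Fin n → ℝ) (hs : ∀ i, s i = 1 ∨ s i = -1) :
    (∑ ε ∈ Finset.univ.filter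
        (fun ε : Fin n → Bool => 0 ≤ ∑ i, pmVec n ε i * s i),
      pmVec n ε) = ((n - 1).choose ((n - 1) / 2) : ℝ) • s :=
  sum_signvectors_nonneg_side_odd_general n hno s hs
end

section
/- Let n ≥ 1 and define ρ = C(n-1, n/2) / (2^{n-1} + C(n, n/2)/2) if n is even, and ρ = C(n-1, (n-1)/2) / 2^{n-1} if n is odd. Let g ∈ ℝ^n be of the form g = t·v with t a nonzero real number and v ∈ {-1,1}^n, and let S(g) = {d ∈ {-1,1}^n : dᵀg ≥ 0}. Then the average of d over S(g), namely (1/|S(g)|)·Σ_{d∈S(g)} d, equals (ρ/‖g‖_∞)·g, where ‖g‖_∞ is the maximum absolute value of the components of g. -/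
open Finset

private lemma spsa_countT (m k : ℕ) :
    ((univ : Finset (Fin m → Bool)).filter
      (fun ε => (univ.filter fun i => ε i = true).card = k)).card = m.choose k := by
  have h : ((univ : Finset (Fin m → Bool)).filter
      (fun ε => (univ.filter fun i => ε i = true).card = k)).card
      = (powersetCard k (univ : Finset (Fin m))).card := by
    refine card_bij' (fun ε _ => univ.filter fun i => ε i = true)
        (fun s _ => fun i => decide (i ∈ s)) ?_ ?_ ?_ ?_
    · intro ε hε
      simp only [mem_filter, mem_univ, true_and] at hε
      simp [mem_powersetCard, hε]
    · intro s hs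
      simp only [mem_powersetCard] at hs
      simp only [mem_filter, mem_univ, true_and]
      rw [show (univ.filter fun i => decide (i ∈ s) = true) = s by ext i; simp]
      exact hs.2
    · intro ε hε
      funext i
      simp
    · intro s hs
      ext i
      simp
  rw [h, card_powersetCard, card_univ, Fintype.card_fin]

private lemma spsa_countT_fix (m k : ℕ) (i0 : Fin m) :
    ((univ : Finset (Fin m → Bool)).filter
      (fun ε => ε i0 = true ∧ (univ.filter fun i => ε i = true).card = k + 1)).card
      = (m - 1).choose k := by
  have h : ((univ : Finset (Fin m → Bool)).filter
      (fun ε => ε i0 = true ∧ (univ.filter fun i => ε i = true).card = k + 1)).card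
      = (powersetCard k ((univ : Finset (Fin m)).erase i0)).card := by
    refine card_bij' (fun ε _ => ((univ.filter fun i => ε i = true).erase i0))
        (fun s _ => fun i => decide (i ∈ insert i0 s)) ?_ ?_ ?_ ?_
    · intro ε hε
      simp only [mem_filter, mem_univ, true_and] at hε
      rw [mem_powersetCard]
      constructor
      · intro x hx
        simp only [mem_erase, mem_filter, mem_univ, true_and] at hx ⊢
        exact ⟨hx.1, trivial⟩
      · rw [card_erase_of_mem (by simp [hε.1]), hε.2]
        simp
    · intro s hs
      rw [mem_powersetCard] at hs
      have hi0 : i0 ∉ s := fun h => (mem_erase.mp (hs.1 h)).1 rfl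
      simp only [mem_filter, mem_univ, true_and]
      constructor
      · simp
      · rw [show (univ.filter fun i => decide (i ∈ insert i0 s) = true) = insert i0 s by
          ext i; simp]
        rw [card_insert_of_notMem hi0, hs.2]
    · intro ε hε
      simp only [mem_filter, mem_univ, true_and] at hε
      funext i
      show decide (i ∈ insert i0 ((univ.filter fun i => ε i = true).erase i0)) = ε i
      rw [insert_erase (by simp [hε.1])]
      simp
    · intro s hs
      rw [mem_powersetCard] at hs
      have hi0 : i0 ∉ s := fun h => (mem_erase.mp (hs.1 h)).1 rfl
      show ((univ.filter fun i => decide (i ∈ insert i0 s) = true)).erase i0 = s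
      rw [show (univ.filter fun i => decide (i ∈ insert i0 s) = true) = insert i0 s by
        ext i; simp]
      rw [erase_insert hi0]
  rw [h, card_powersetCard, card_erase_of_mem (mem_univ i0), card_univ, Fintype.card_fin]

private lemma spsa_sumA (n : ℕ) (hn : 1 ≤ n) :
    (∑ k ∈ range (n+1), if n ≤ 2 * k then (n.choose k : ℝ) else 0)
      = 2 ^ (n-1) + (if Even n then (n.choose (n/2) : ℝ) / 2 else 0) := by
  set D : ℝ := if Even n then (n.choose (n/2) : ℝ) else 0 with hD
  set A : ℝ := ∑ k ∈ range (n+1), if n ≤ 2 * k then (n.choose k : ℝ) else 0 with hA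
  set B : ℝ := ∑ k ∈ range (n+1), if n < 2 * k then (n.choose k : ℝ) else 0 with hB
  have hAB : A = B + D := by
    have hD2 : D = ∑ k ∈ range (n+1), if n = 2 * k then (n.choose k : ℝ) else 0 := by
      by_cases he : Even n
      · obtain ⟨m, hm⟩ := he
        have hm' : n = 2 * m := by omega
        rw [Finset.sum_eq_single m]
        · have he2 : Even n := ⟨m, hm⟩
          rw [hD, if_pos hm']
          simp [he2, show n / 2 = m by omega]
        · intro k hk hkm
          rw [if_neg (by omega)]
        · intro h
          exfalso; apply h; rw [mem_range]; omega
      · rw [hD, if_neg he, eq_comm]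
        apply Finset.sum_eq_zero
        intro k hk
        rw [if_neg]
        intro h
        exact he ⟨k, by omega⟩
    rw [hA, hB, hD2, ← Finset.sum_add_distrib]
    apply Finset.sum_congr rfl
    intro k hk
    rcases lt_trichotomy n (2*k) with h | h | h
    · rw [if_pos (le_of_lt h), if_pos h, if_neg (by omega)]; ring
    · rw [if_pos (le_of_eq h), if_neg (by omega), if_pos h]; ring
    · rw [if_neg (by omega), if_neg (by omega), if_neg (by omega)]; ring
  have hBC : B = ∑ k ∈ range (n+1), if 2 * k < n then (n.choose k : ℝ) else 0 := by
    rw [hB, ← Finset.sum_range_reflect]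
    apply Finset.sum_congr rfl
    intro k hk
    rw [mem_range] at hk
    have h1 : n + 1 - 1 - k = n - k := by omega
    rw [h1]
    by_cases h : 2 * k < n
    · rw [if_pos (by omega), if_pos h, Nat.choose_symm (by omega : k ≤ n)]
    · rw [if_neg (by omega), if_neg h]
  have htot : A + B = 2 ^ n := by
    rw [hA, hBC, ← Finset.sum_add_distrib]
    have hstep : ∀ k ∈ range (n+1),
        ((if n ≤ 2 * k then (n.choose k : ℝ) else 0)
          + (if 2 * k < n then (n.choose k : ℝ) else 0)) = (n.choose k : ℝ) := by
      intro k hk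
      by_cases h : n ≤ 2 * k
      · rw [if_pos h, if_neg (by omega)]; ring
      · rw [if_neg h, if_pos (by omega)]; ring
    rw [Finset.sum_congr rfl hstep]
    have h3 := congrArg (Nat.cast : ℕ → ℝ) (Nat.sum_range_choose n)
    push_cast at h3
    exact h3
  have h2 : (2:ℝ)^n = 2 * 2^(n-1) := by
    rw [← pow_succ']
    congr 1
    omega
  have hDhalf : (if Even n then (n.choose (n/2) : ℝ) / 2 else 0) = D / 2 := by
    by_cases he : Even n <;> simp [hD, he]
  rw [hDhalf]
  linarith

private lemma spsa_sum_pm (n : ℕ) (ε : Fin n → Bool) :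
    ∑ i, pmVec n ε i = 2 * ((univ.filter fun i => ε i = true).card : ℝ) - n := by
  have h : ∀ i, pmVec n ε i = 2 * (if ε i = true then (1:ℝ) else 0) - 1 := by
    intro i
    unfold pmVec
    by_cases h : ε i <;> simp [h] <;> norm_num
  rw [Finset.sum_congr rfl fun i _ => h i, Finset.sum_sub_distrib, ← Finset.mul_sum,
    Finset.sum_boole, Finset.sum_const, card_univ, Fintype.card_fin]
  simp

private lemma spsa_pm_nonneg_iff (n : ℕ) (ε : Fin n → Bool) :
    0 ≤ ∑ i, pmVec n ε i ↔ n ≤ 2 * (univ.filter fun i => ε i = true).card := by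
  rw [spsa_sum_pm]
  constructor
  · intro h
    by_contra hc
    push_neg at hc
    have : ((2 * (univ.filter fun i => ε i = true).card : ℕ) : ℝ) < n := by
      exact_mod_cast Nat.cast_lt.mpr hc
    push_cast at this
    linarith
  · intro h
    have : ((n:ℕ):ℝ) ≤ ((2 * (univ.filter fun i => ε i = true).card : ℕ) : ℝ) :=
      Nat.cast_le.mpr h
    push_cast at this
    linarith

private lemma spsa_cardS (n : ℕ) :
    ((univ : Finset (Fin n → Bool)).filter
      (fun ε => n ≤ 2 * (univ.filter fun i => ε i = true).card)).card
      = ∑ k ∈ range (n+1), if n ≤ 2 * k then n.choose k else 0 := by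
  rw [Finset.card_eq_sum_card_fiberwise
    (f := fun ε => (univ.filter fun i => ε i = true).card) (t := range (n+1))
    (fun ε _ => by
      rw [mem_coe, mem_range]
      exact Nat.lt_succ_of_le (le_trans (card_filter_le _ _) (by simp)))]
  apply Finset.sum_congr rfl
  intro k hk
  rw [Finset.filter_filter]
  by_cases h : n ≤ 2 * k
  · rw [if_pos h]
    have heq : ∀ ε : Fin n → Bool,
        ((n ≤ 2 * (univ.filter fun i => ε i = true).card ∧
          (univ.filter fun i => ε i = true).card = k))
        ↔ (univ.filter fun i => ε i = true).card = k := by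
      intro ε
      constructor
      · exact fun h => h.2
      · intro h2; exact ⟨by omega, h2⟩
    rw [Finset.filter_congr fun ε _ => heq ε]
    exact spsa_countT n k
  · rw [if_neg h]
    rw [Finset.card_eq_zero, Finset.filter_eq_empty_iff]
    intro ε _
    rintro ⟨h1, h2⟩
    omega

private lemma spsa_filter_update_true (n : ℕ) (i0 : Fin n) (ε : Fin n → Bool) :
    (univ.filter fun i => Function.update ε i0 true i = true)
      = insert i0 (univ.filter fun i => ε i = true) := by
  ext i
  by_cases h : i = i0
  · subst h; simp [Function.update_self]
  · simp [Function.update_of_ne h, h]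

private lemma spsa_filter_update_false (n : ℕ) (i0 : Fin n) (ε : Fin n → Bool) :
    (univ.filter fun i => Function.update ε i0 false i = true)
      = (univ.filter fun i => ε i = true).erase i0 := by
  ext i
  by_cases h : i = i0
  · subst h; simp [Function.update_self]
  · simp [Function.update_of_ne h, h]

private lemma spsa_flip_card (n : ℕ) (i0 : Fin n) :
    ((univ : Finset (Fin n → Bool)).filter
      (fun ε => n ≤ 2 * (univ.filter fun i => ε i = true).card ∧ ε i0 = false)).card
    = ((univ : Finset (Fin n → Bool)).filter
      (fun ε => n + 2 ≤ 2 * (univ.filter fun i => ε i = true).card ∧ ε i0 = true)).card := by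
  refine card_bij' (fun ε _ => Function.update ε i0 true)
      (fun ε _ => Function.update ε i0 false) ?_ ?_ ?_ ?_
  · intro ε hε
    simp only [mem_filter, mem_univ, true_and] at hε ⊢
    have hT : (univ.filter fun i => Function.update ε i0 true i = true).card
        = (univ.filter fun i => ε i = true).card + 1 := by
      rw [spsa_filter_update_true, card_insert_of_notMem (by simp [hε.2])]
    refine ⟨by omega, by simp [Function.update_self]⟩
  · intro ε hε
    simp only [mem_filter, mem_univ, true_and] at hε ⊢
    have hm : i0 ∈ univ.filter fun i => ε i = true := by simp [hε.2]
    have hT : (univ.filter fun i => Function.update ε i0 false i = true).card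
        = (univ.filter fun i => ε i = true).card - 1 := by
      rw [spsa_filter_update_false, card_erase_of_mem hm]
    have hpos : 1 ≤ (univ.filter fun i => ε i = true).card := card_pos.mpr ⟨i0, hm⟩
    refine ⟨by omega, by simp [Function.update_self]⟩
  · intro ε hε
    simp only [mem_filter, mem_univ, true_and] at hε
    show Function.update (Function.update ε i0 true) i0 false = ε
    rw [Function.update_idem, ← hε.2, Function.update_eq_self]
  · intro ε hε
    simp only [mem_filter, mem_univ, true_and] at hε
    show Function.update (Function.update ε i0 false) i0 true = ε
    rw [Function.update_idem, ← hε.2, Function.update_eq_self]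

private lemma spsa_numS (n : ℕ) (hn : 1 ≤ n) (i0 : Fin n) :
    ∑ ε ∈ (univ : Finset (Fin n → Bool)).filter
        (fun ε => n ≤ 2 * (univ.filter fun i => ε i = true).card),
      pmVec n ε i0
    = ((n-1).choose ((n+1)/2 - 1) : ℝ) := by
  have hsplit : ∑ ε ∈ (univ : Finset (Fin n → Bool)).filter
        (fun ε => n ≤ 2 * (univ.filter fun i => ε i = true).card),
      pmVec n ε i0
      = (((univ : Finset (Fin n → Bool)).filter
          (fun ε => n ≤ 2 * (univ.filter fun i => ε i = true).card ∧ ε i0 = true)).card : ℝ)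
      - (((univ : Finset (Fin n → Bool)).filter
          (fun ε => n ≤ 2 * (univ.filter fun i => ε i = true).card ∧ ε i0 = false)).card : ℝ) := by
    unfold pmVec
    rw [Finset.sum_ite (f := fun _ => (1:ℝ)) (g := fun _ => (-1:ℝ))]
    rw [Finset.sum_const, Finset.sum_const, Finset.filter_filter, Finset.filter_filter]
    have hfc : Finset.filter (fun ε : Fin n → Bool =>
          (n ≤ 2 * (univ.filter fun i => ε i = true).card) ∧ ¬ ε i0 = true) univ
        = Finset.filter (fun ε : Fin n → Bool =>
          (n ≤ 2 * (univ.filter fun i => ε i = true).card) ∧ ε i0 = false) univ := by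
      apply Finset.filter_congr
      intro ε _
      cases h : ε i0 <;> simp [h]
    rw [hfc]
    simp
    ring
  rw [hsplit, spsa_flip_card n i0]
  have hACA : ((univ : Finset (Fin n → Bool)).filter
      (fun ε => n ≤ 2 * (univ.filter fun i => ε i = true).card ∧ ε i0 = true)).card
      = ((univ : Finset (Fin n → Bool)).filter
      (fun ε => n + 2 ≤ 2 * (univ.filter fun i => ε i = true).card ∧ ε i0 = true)).card
      + ((univ : Finset (Fin n → Bool)).filter
      (fun ε => ε i0 = true ∧ (univ.filter fun i => ε i = true).card
          = ((n+1)/2 - 1) + 1)).card := by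
    rw [← card_union_of_disjoint]
    · congr 1
      ext ε
      simp only [mem_union, mem_filter, mem_univ, true_and]
      by_cases hb : ε i0 = true
      · simp only [hb, and_true, true_and]
        omega
      · simp [hb]
    · rw [Finset.disjoint_left]
      intro ε h1 h2
      simp only [mem_filter, mem_univ, true_and] at h1 h2
      omega
  rw [hACA, spsa_countT_fix]
  push_cast
  ring

private lemma spsa_core (n : ℕ) (hn : 1 ≤ n) (i0 : Fin n) :
    ∑ ε ∈ (univ : Finset (Fin n → Bool)).filter
        (fun ε => 0 ≤ ∑ i, pmVec n ε i), pmVec n ε i0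
    = (if Even n then
        ((n - 1).choose (n / 2) : ℝ) / (2 ^ (n - 1) + (n.choose (n / 2) : ℝ) / 2)
      else ((n - 1).choose ((n - 1) / 2) : ℝ) / 2 ^ (n - 1))
      * ((univ : Finset (Fin n → Bool)).filter
        (fun ε => 0 ≤ ∑ i, pmVec n ε i)).card := by
  have hfe : (univ : Finset (Fin n → Bool)).filter (fun ε => 0 ≤ ∑ i, pmVec n ε i)
      = (univ : Finset (Fin n → Bool)).filter
        (fun ε => n ≤ 2 * (univ.filter fun i => ε i = true).card) :=
    Finset.filter_congr fun ε _ => by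
      simpa using spsa_pm_nonneg_iff n ε
  rw [hfe, spsa_numS n hn i0, spsa_cardS n]
  have hcast : ((∑ k ∈ range (n+1), if n ≤ 2 * k then n.choose k else 0 : ℕ) : ℝ)
      = ∑ k ∈ range (n+1), if n ≤ 2 * k then (n.choose k : ℝ) else 0 := by
    push_cast
    apply Finset.sum_congr rfl
    intro k _
    by_cases h : n ≤ 2 * k <;> simp [h]
  rw [hcast, spsa_sumA n hn]
  by_cases he : Even n
  · have hn2 : 2 ≤ n := by
      rcases he with ⟨m, hm⟩; omega
    rw [if_pos he, if_pos he]
    have hden : (0:ℝ) < 2 ^ (n-1) + (n.choose (n/2) : ℝ) / 2 := by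
      have : (0:ℝ) ≤ (n.choose (n/2) : ℝ) := Nat.cast_nonneg _
      positivity
    rw [div_mul_cancel₀ _ (ne_of_gt hden)]
    congr 1
    have h1 : (n+1)/2 - 1 = n/2 - 1 := by
      rcases he with ⟨m, hm⟩; omega
    rw [h1]
    rw [show n/2 - 1 = (n - 1) - (n/2) by rcases he with ⟨m, hm⟩; omega]
    rw [Nat.choose_symm (by rcases he with ⟨m, hm⟩; omega)]
  · rw [if_neg he, if_neg he]
    have hden : ((2:ℝ)) ^ (n-1) ≠ 0 := by positivity
    rw [add_zero, div_mul_cancel₀ _ hden]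
    have hodd : ¬ (2 ∣ n) := by
      intro ⟨m, hm⟩; exact he ⟨m, by omega⟩
    congr 2
    omega

/-- Lemma 1 of the paper (deterministic content): if `g` is a nonzero scalar
multiple of a ±1 vector and `S(g) = {d ∈ {-1,1}^n : dᵀg ≥ 0}`, then the average
of `d` over `S(g)` equals `(ρ/‖g‖_∞) • g`, where `ρ` is the constant of
Algorithm SPSA1-A and `‖g‖` is the sup norm on `Fin n → ℝ`. -/
theorem avg_signvectors_nonneg_side
    (n : ℕ) (hn : 1 ≤ n)
    (ρ : ℝ)
    (hρ : ρ = if Even n then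
        ((n - 1).choose (n / 2) : ℝ) / (2 ^ (n - 1) + (n.choose (n / 2) : ℝ) / 2)
      else ((n - 1).choose ((n - 1) / 2) : ℝ) / 2 ^ (n - 1))
    (g : Fin n → ℝ) (t : ℝ) (ht : t ≠ 0)
    (v : Fin n → ℝ) (hv : ∀ i, v i = 1 ∨ v i = -1) (hg : g = t • v) :
    (((Finset.univ.filter
          (fun ε : Fin n → Bool => 0 ≤ ∑ i, pmVec n ε i * g i)).card : ℝ))⁻¹ •
      (∑ ε ∈ Finset.univ.filter
          (fun ε : Fin n → Bool => 0 ≤ ∑ i, pmVec n ε i * g i),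
        pmVec n ε)
      = (ρ / ‖g‖) • g := by
  classical
  subst hg
  have habs : ‖(t • v : Fin n → ℝ)‖ = |t| := by
    rw [norm_smul, Real.norm_eq_abs]
    have hv1 : ‖v‖ = 1 := by
      apply le_antisymm
      · apply (pi_norm_le_iff_of_nonneg zero_le_one).mpr
        intro i
        rcases hv i with h | h <;> simp [h, Real.norm_eq_abs]
      · calc (1:ℝ) = ‖v ⟨0, hn⟩‖ := by
              rcases hv ⟨0, hn⟩ with h | h <;> simp [h]
          _ ≤ ‖v‖ := norm_le_pi_norm v _
    rw [hv1, mul_one]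
  have habspos : (0:ℝ) < |t| := abs_pos.mpr ht
  set b : Fin n → Bool := fun i => decide (0 < t * v i) with hb
  set σ : Fin n → ℝ := fun i => if b i then 1 else -1 with hσ
  have hvabs : ∀ i, |v i| = 1 := by
    intro i
    rcases hv i with h | h <;> simp [h]
  have htv0 : ∀ i, t * v i ≠ 0 := by
    intro i
    rcases hv i with h | h <;> simp [h, ht]
  have hgσ : ∀ i, t * v i = σ i * |t| := by
    intro i
    by_cases hbi : b i
    · have hlt : 0 < t * v i := by
        have := hbi
        simp only [hb, decide_eq_true_eq] at this
        exact this
      have h1 : t * v i = |t * v i| := (abs_of_pos hlt).symm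
      rw [h1, abs_mul, hvabs i, mul_one, hσ]
      simp [hbi]
    · have hle : ¬ (0 < t * v i) := by
        intro hc
        exact hbi (by simp [hb, hc])
      have hlt : t * v i < 0 := lt_of_le_of_ne (not_lt.mp hle) (htv0 i)
      have h1 : t * v i = -|t * v i| := by rw [abs_of_neg hlt]; ring
      rw [h1, abs_mul, hvabs i, mul_one, hσ]
      simp [hbi]
  set Φ : (Fin n → Bool) → (Fin n → Bool) := fun ε => fun i => ε i == b i with hΦ
  have hpmΦ : ∀ ε (i : Fin n), pmVec n (Φ ε) i = pmVec n ε i * σ i := by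
    intro ε i
    unfold pmVec
    simp only [hΦ, hσ]
    cases h1 : ε i <;> cases h2 : b i <;> simp [h1, h2] <;> norm_num
  have hsum : ∀ ε, ∑ i, pmVec n ε i * (t • v) i = |t| * ∑ i, pmVec n (Φ ε) i := by
    intro ε
    rw [Finset.mul_sum]
    apply Finset.sum_congr rfl
    intro i _
    rw [hpmΦ, Pi.smul_apply, smul_eq_mul, hgσ i]
    ring
  have hcond : ∀ ε : Fin n → Bool,
      (0 ≤ ∑ i, pmVec n ε i * (t • v) i) ↔ (0 ≤ ∑ i, pmVec n (Φ ε) i) := by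
    intro ε
    rw [hsum]
    exact mul_nonneg_iff_of_pos_left habspos
  have hΦΦ : ∀ ε, Φ (Φ ε) = ε := by
    intro ε
    funext i
    simp only [hΦ]
    cases h1 : ε i <;> cases h2 : b i <;> simp [h1, h2]
  set S : Finset (Fin n → Bool) :=
    Finset.univ.filter (fun ε : Fin n → Bool => 0 ≤ ∑ i, pmVec n ε i * (t • v) i) with hS
  set S' : Finset (Fin n → Bool) :=
    Finset.univ.filter (fun ε : Fin n → Bool => 0 ≤ ∑ i, pmVec n ε i) with hS'
  have hmemS : ∀ ε, ε ∈ S ↔ Φ ε ∈ S' := by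
    intro ε
    simp only [hS, hS', mem_filter, mem_univ, true_and]
    exact hcond ε
  have hcard : S.card = S'.card := by
    refine card_nbij' Φ Φ ?_ ?_ ?_ ?_
    · intro ε hε; exact (hmemS ε).mp hε
    · intro ε hε
      rw [mem_coe, hmemS, hΦΦ]
      exact hε
    · intro ε _; exact hΦΦ ε
    · intro ε _; exact hΦΦ ε
  have hsum2 : ∀ i0 : Fin n, ∑ ε ∈ S, pmVec n ε i0 = σ i0 * ∑ ε ∈ S', pmVec n ε i0 := by
    intro i0
    rw [Finset.mul_sum]
    refine Finset.sum_nbij' Φ Φ ?_ ?_ ?_ ?_ ?_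
    · intro ε hε; exact (hmemS ε).mp hε
    · intro ε hε
      rw [hmemS, hΦΦ]
      exact hε
    · intro ε _; exact hΦΦ ε
    · intro ε _; exact hΦΦ ε
    · intro ε _
      have hσ2 : σ i0 * σ i0 = 1 := by
        by_cases hbb : b i0 <;> simp [hσ, hbb]
      rw [hpmΦ ε i0, show σ i0 * (pmVec n ε i0 * σ i0) = σ i0 * σ i0 * pmVec n ε i0 by ring,
        hσ2, one_mul]
  have hS'pos : 0 < S'.card := by
    rw [hS', Finset.card_pos]
    refine ⟨fun _ => true, ?_⟩
    simp only [mem_filter, mem_univ, true_and]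
    have : ∀ i : Fin n, pmVec n (fun _ => true) i = 1 := fun i => rfl
    rw [Finset.sum_congr rfl fun i _ => this i]
    simp
  have hS'ne : ((S'.card : ℝ)) ≠ 0 := Nat.cast_ne_zero.mpr hS'pos.ne'
  funext i0
  have hcore := spsa_core n hn i0
  rw [← hS'] at hcore
  rw [← hρ] at hcore
  simp only [Pi.smul_apply, Finset.sum_apply, smul_eq_mul]
  rw [hcard, hsum2 i0, hcore, habs, hgσ i0]
  field_simp
end

section
/- Let f : ℝ^n → ℝ be three times continuously differentiable on the open ball of radius r > 0 centered at x ∈ ℝ^n, and suppose the third derivative satisfies ‖D³f(y)‖ ≤ B (operator norm) for all y in this ball. Then for every c > 0 with c·√n < r, the Euclidean norm of the difference between the average over all ξ ∈ {-1,1}^n of [(f(x+cξ) − f(x−cξ))/(2c)]·ξ and the gradient ∇f(x) is at most (B·n²/6)·c². In particular the bias of the simultaneous-perturbation gradient approximation is O(c²) as c → 0. -/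
/-!
Since `∑_ξ ξᵢ ξⱼ = 2ⁿ δᵢⱼ` over `ξ ∈ {±1}ⁿ`, the average of `⟪∇f x, ξ⟫ ξ` is `∇f x`, so the bias
is the average of `e(ξ) ξ` with `e(ξ) = (f (x + cξ) - f (x - cξ)) / (2c) - Df(x) ξ`.
The symmetric difference cancels the even Taylor terms: integrating the first-order expansion of
`Df` (remainder `≤ B‖u‖²/2`, as `D²f` is `B`-Lipschitz) along the segment gives
`‖f (x + h) - f (x - h) - 2 Df(x) h‖ ≤ B‖h‖³/3`. With `‖cξ‖ = c√n` this bounds `|e(ξ)|` by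
`B n √n c²/6`, and multiplying by `‖ξ‖ = √n` gives `B n² c²/6`.
-/

/-- The ±1 vector in Euclidean `ℝ^n` associated with a Boolean sign pattern. -/
def pmE (n : ℕ) (ε : Fin n → Bool) : EuclideanSpace ℝ (Fin n) :=
  WithLp.toLp 2 fun i => if ε i then 1 else -1

open Metric Set
open scoped InnerProductSpace

lemma pmE_apply_sq (n : ℕ) (ε : Fin n → Bool) (i : Fin n) : pmE n ε i ^ 2 = 1 := by
  by_cases h : ε i <;> simp [pmE, h]

lemma norm_pmE (n : ℕ) (ε : Fin n → Bool) : ‖pmE n ε‖ = √n := by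
  simp [EuclideanSpace.norm_eq, Real.norm_eq_abs, sq_abs, pmE_apply_sq]

lemma sum_pmE_mul_pmE (n : ℕ) (i j : Fin n) :
    ∑ ε : Fin n → Bool, pmE n ε i * pmE n ε j = if i = j then (2 : ℝ) ^ n else 0 := by
  split_ifs with hij
  · subst hij
    simp [← sq, pmE_apply_sq]
  · -- flipping the `i`-th sign negates every term
    let toggle (ε : Fin n → Bool) : Fin n → Bool := Function.update ε i !(ε i)
    have htoggle : toggle.Involutive := fun ε => by simp [toggle]
    have hneg : ∑ ε : Fin n → Bool, pmE n ε i * pmE n ε j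
        = ∑ ε : Fin n → Bool, -(pmE n ε i * pmE n ε j) := by
      refine Fintype.sum_bijective toggle htoggle.bijective _ _ fun ε => ?_
      by_cases hi : ε i <;> by_cases hj : ε j <;>
        simp [toggle, pmE, Function.update_of_ne (Ne.symm hij), hi, hj]
    rw [Finset.sum_neg_distrib] at hneg
    linarith

lemma inv_two_pow_smul_sum_inner_smul_pmE (n : ℕ) (g : EuclideanSpace ℝ (Fin n)) :
    ((2 : ℝ) ^ n)⁻¹ • ∑ ε : Fin n → Bool, ⟪g, pmE n ε⟫_ℝ • pmE n ε = g := by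
  ext i
  have hsum : ∑ ε : Fin n → Bool, ⟪g, pmE n ε⟫_ℝ * pmE n ε i = 2 ^ n * g i := by
    simp_rw [PiLp.inner_apply, RCLike.inner_apply', conj_trivial, Finset.sum_mul, mul_assoc]
    rw [Finset.sum_comm]
    simp_rw [← Finset.mul_sum, sum_pmE_mul_pmE]
    simp [mul_comm]
  simp [WithLp.ofLp_sum, Finset.sum_apply, hsum]

lemma norm_inv_two_pow_smul_sum_smul_pmE_le {n : ℕ} {a : (Fin n → Bool) → ℝ} {M : ℝ}
    (ha : ∀ ε, |a ε| ≤ M) :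
    ‖((2 : ℝ) ^ n)⁻¹ • ∑ ε : Fin n → Bool, a ε • pmE n ε‖ ≤ M * √n := by
  have hsum : ‖∑ ε : Fin n → Bool, a ε • pmE n ε‖ ≤ 2 ^ n * (M * √n) := by
    refine (norm_sum_le_of_le _ (n := fun _ => M * √n) fun ε _ => ?_).trans_eq (by simp)
    rw [norm_smul, norm_pmE, Real.norm_eq_abs]
    exact mul_le_mul_of_nonneg_right (ha ε) (Real.sqrt_nonneg _)
  rw [norm_smul, norm_inv, norm_pow, Real.norm_two, inv_mul_le_iff₀ (by positivity)]
  exact hsum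

section TaylorBounds

variable {E F : Type*} [NormedAddCommGroup E] [NormedSpace ℝ E] [NormedAddCommGroup F]
  [NormedSpace ℝ F]

lemma norm_apply_one_le_of_norm_deriv_le_mul_pow {Φ φ : ℝ → F} {C : ℝ} (k : ℕ) (h0 : Φ 0 = 0)
    (hΦ : ∀ t ∈ Icc (0 : ℝ) 1, HasDerivAt Φ (φ t) t)
    (hφ : ∀ t ∈ Ico (0 : ℝ) 1, ‖φ t‖ ≤ C * t ^ k) :
    ‖Φ 1‖ ≤ C / (k + 1) := by
  have hbound : ∀ t, HasDerivAt (fun t => C / (k + 1) * t ^ (k + 1)) (C * t ^ k) t := fun t => by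
    refine ((hasDerivAt_pow (k + 1) t).const_mul (C / (k + 1))).congr_deriv ?_
    push_cast
    field_simp
  simpa using image_norm_le_of_norm_deriv_right_le_deriv_boundary
    (fun t ht => (hΦ t ht).continuousAt.continuousWithinAt)
    (fun t ht => (hΦ t (Ico_subset_Icc_self ht)).hasDerivWithinAt)
    (by simp [h0]) hbound hφ (right_mem_Icc.2 zero_le_one)

lemma add_smul_mem_ball {x u : E} {r t : ℝ} (hu : ‖u‖ < r) (ht : t ∈ Icc (0 : ℝ) 1) :
    x + t • u ∈ ball x r := by
  rw [mem_ball, dist_eq_norm, add_sub_cancel_left, norm_smul, Real.norm_of_nonneg ht.1]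
  exact (mul_le_of_le_one_left (norm_nonneg u) ht.2).trans_lt hu

lemma hasDerivAt_comp_add_smul {g : E → F} {x u : E} {t : ℝ}
    (hg : DifferentiableAt ℝ g (x + t • u)) :
    HasDerivAt (fun s : ℝ => g (x + s • u)) (fderiv ℝ g (x + t • u) u) t := by
  have hline : HasDerivAt (fun s : ℝ => x + s • u) u t := by
    simpa using ((hasDerivAt_id t).smul_const u).const_add x
  exact hg.hasFDerivAt.comp_hasDerivAt t hline

variable {f : E → F} {x : E} {r B : ℝ}

lemma norm_fderiv_fderiv_sub_le (hf : ContDiffOn ℝ 3 f (ball x r))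
    (hB : ∀ y ∈ ball x r, ‖iteratedFDeriv ℝ 3 f y‖ ≤ B) {y z : E}
    (hy : y ∈ ball x r) (hz : z ∈ ball x r) :
    ‖fderiv ℝ (fderiv ℝ f) y - fderiv ℝ (fderiv ℝ f) z‖ ≤ B * ‖y - z‖ := by
  have hG : ContDiffOn ℝ 1 (fderiv ℝ (fderiv ℝ f)) (ball x r) :=
    (hf.fderiv_of_isOpen isOpen_ball (m := 2) (by norm_num)).fderiv_of_isOpen isOpen_ball
      (by norm_num)
  refine (convex_ball x r).norm_image_sub_le_of_norm_fderiv_le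
    (fun w hw => (hG.differentiableOn one_ne_zero w hw).differentiableAt
      (isOpen_ball.mem_nhds hw)) (fun w hw => ?_) hz hy
  rw [← norm_iteratedFDeriv_zero (𝕜 := ℝ), norm_iteratedFDeriv_fderiv, norm_iteratedFDeriv_fderiv,
    norm_iteratedFDeriv_fderiv]
  exact hB w hw

lemma norm_fderiv_add_sub_sub_le (hf : ContDiffOn ℝ 3 f (ball x r))
    (hB : ∀ y ∈ ball x r, ‖iteratedFDeriv ℝ 3 f y‖ ≤ B) {u : E} (hu : ‖u‖ < r) :
    ‖fderiv ℝ f (x + u) - fderiv ℝ f x - fderiv ℝ (fderiv ℝ f) x u‖ ≤ B / 2 * ‖u‖ ^ 2 := by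
  have hx : x ∈ ball x r := mem_ball_self ((norm_nonneg u).trans_lt hu)
  have hF : ContDiffOn ℝ 2 (fderiv ℝ f) (ball x r) :=
    hf.fderiv_of_isOpen isOpen_ball (by norm_num)
  have hderiv : ∀ t ∈ Icc (0 : ℝ) 1, HasDerivAt
      (fun t : ℝ => fderiv ℝ f (x + t • u) - fderiv ℝ f x - t • fderiv ℝ (fderiv ℝ f) x u)
      (fderiv ℝ (fderiv ℝ f) (x + t • u) u - fderiv ℝ (fderiv ℝ f) x u) t := fun t ht => by
    have hmem := add_smul_mem_ball (x := x) hu ht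
    refine ((hasDerivAt_comp_add_smul ((hF.differentiableOn two_ne_zero _ hmem).differentiableAt
      (isOpen_ball.mem_nhds hmem))).sub_const _).sub ?_
    simpa using (hasDerivAt_id t).smul_const (fderiv ℝ (fderiv ℝ f) x u)
  have hbound : ∀ t ∈ Ico (0 : ℝ) 1,
      ‖fderiv ℝ (fderiv ℝ f) (x + t • u) u - fderiv ℝ (fderiv ℝ f) x u‖ ≤ B * ‖u‖ ^ 2 * t :=
    fun t ht => calc
      _ ≤ ‖fderiv ℝ (fderiv ℝ f) (x + t • u) - fderiv ℝ (fderiv ℝ f) x‖ * ‖u‖ := by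
        rw [← sub_apply]
        exact ContinuousLinearMap.le_opNorm _ u
      _ ≤ B * ‖(x + t • u) - x‖ * ‖u‖ := by
        gcongr
        exact norm_fderiv_fderiv_sub_le hf hB (add_smul_mem_ball hu (Ico_subset_Icc_self ht)) hx
      _ = B * ‖u‖ ^ 2 * t := by
        rw [add_sub_cancel_left, norm_smul, Real.norm_of_nonneg ht.1]
        ring
  rw [show B / 2 * ‖u‖ ^ 2 = B * ‖u‖ ^ 2 / ((1 : ℕ) + 1) by push_cast; ring]
  simpa using
    norm_apply_one_le_of_norm_deriv_le_mul_pow 1 (by simp) hderiv (by simpa using hbound)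

lemma norm_sub_sub_two_smul_fderiv_le (hf : ContDiffOn ℝ 3 f (ball x r))
    (hB : ∀ y ∈ ball x r, ‖iteratedFDeriv ℝ 3 f y‖ ≤ B) {h : E} (hh : ‖h‖ < r) :
    ‖f (x + h) - f (x - h) - (2 : ℝ) • fderiv ℝ f x h‖ ≤ B / 3 * ‖h‖ ^ 3 := by
  let R (v : E) (t : ℝ) : F :=
    (fderiv ℝ f (x + t • v) - fderiv ℝ f x - fderiv ℝ (fderiv ℝ f) x (t • v)) v
  have hR : ∀ v, ‖v‖ = ‖h‖ → ∀ t ∈ Icc (0 : ℝ) 1, ‖R v t‖ ≤ B / 2 * ‖h‖ ^ 3 * t ^ 2 := by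
    intro v hv t ht
    have htv : ‖t • v‖ = t * ‖h‖ := by rw [norm_smul, Real.norm_of_nonneg ht.1, hv]
    calc ‖R v t‖ ≤ B / 2 * ‖t • v‖ ^ 2 * ‖v‖ := by
          refine (ContinuousLinearMap.le_opNorm _ v).trans ?_
          gcongr
          refine norm_fderiv_add_sub_sub_le hf hB ?_
          rw [htv]
          exact (mul_le_of_le_one_left (norm_nonneg h) ht.2).trans_lt hh
      _ = B / 2 * ‖h‖ ^ 3 * t ^ 2 := by rw [htv, hv]; ring
  have hline : ∀ v, ‖v‖ = ‖h‖ → ∀ t ∈ Icc (0 : ℝ) 1,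
      HasDerivAt (fun t : ℝ => f (x + t • v)) (fderiv ℝ f (x + t • v) v) t := by
    intro v hv t ht
    have hmem := add_smul_mem_ball (x := x) (hv ▸ hh) ht
    exact hasDerivAt_comp_add_smul ((hf.differentiableOn three_ne_zero _ hmem).differentiableAt
      (isOpen_ball.mem_nhds hmem))
  have hderiv : ∀ t ∈ Icc (0 : ℝ) 1, HasDerivAt
      (fun t : ℝ => f (x + t • h) - f (x + t • -h) - t • (2 : ℝ) • fderiv ℝ f x h)
      (R h t - R (-h) t) t := by
    intro t ht
    refine (((hline h rfl t ht).sub (hline (-h) (norm_neg h) t ht)).sub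
      ((hasDerivAt_id t).smul_const ((2 : ℝ) • fderiv ℝ f x h))).congr_deriv ?_
    simp only [R, map_smul, map_neg, sub_apply, smul_apply, neg_apply, smul_neg, one_smul]
    module
  have hbound : ∀ t ∈ Ico (0 : ℝ) 1, ‖R h t - R (-h) t‖ ≤ B * ‖h‖ ^ 3 * t ^ 2 := fun t ht => by
    have ht' := Ico_subset_Icc_self ht
    linarith [norm_sub_le (R h t) (R (-h) t), hR h rfl t ht', hR (-h) (norm_neg h) t ht']
  rw [show B / 3 * ‖h‖ ^ 3 = B * ‖h‖ ^ 3 / ((2 : ℕ) + 1) by push_cast; ring]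
  simpa [← sub_eq_add_neg] using
    norm_apply_one_le_of_norm_deriv_le_mul_pow 2 (by simp) hderiv hbound

end TaylorBounds

lemma abs_central_difference_sub_fderiv_le {E : Type*} [NormedAddCommGroup E]
    [NormedSpace ℝ E] {f : E → ℝ} {x : E} {r B : ℝ} (hf : ContDiffOn ℝ 3 f (ball x r))
    (hB : ∀ y ∈ ball x r, ‖iteratedFDeriv ℝ 3 f y‖ ≤ B) {c : ℝ} (hc : 0 < c) {v : E}
    (hv : c * ‖v‖ < r) :
    |(f (x + c • v) - f (x - c • v)) / (2 * c) - fderiv ℝ f x v| ≤ B / 6 * c ^ 2 * ‖v‖ ^ 3 := by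
  have hcv : ‖c • v‖ = c * ‖v‖ := by rw [norm_smul, Real.norm_of_nonneg hc.le]
  have htaylor := norm_sub_sub_two_smul_fderiv_le hf hB (hcv ▸ hv)
  rw [hcv, Real.norm_eq_abs, map_smul, smul_eq_mul, smul_eq_mul] at htaylor
  have hdiff : (f (x + c • v) - f (x - c • v)) / (2 * c) - fderiv ℝ f x v
      = (f (x + c • v) - f (x - c • v) - 2 * (c * fderiv ℝ f x v)) / (2 * c) := by
    field_simp
  calc |(f (x + c • v) - f (x - c • v)) / (2 * c) - fderiv ℝ f x v|
      = |f (x + c • v) - f (x - c • v) - 2 * (c * fderiv ℝ f x v)| / (2 * c) := by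
        rw [hdiff, abs_div, abs_of_pos (by positivity : (0 : ℝ) < 2 * c)]
    _ ≤ B / 3 * (c * ‖v‖) ^ 3 / (2 * c) := by gcongr
    _ = B / 6 * c ^ 2 * ‖v‖ ^ 3 := by field_simp; ring

theorem spsa_estimate_bias_bound_general
    (n : ℕ) (f : EuclideanSpace ℝ (Fin n) → ℝ)
    (x : EuclideanSpace ℝ (Fin n)) (r B : ℝ)
    (hf : ContDiffOn ℝ 3 f (Metric.ball x r))
    (hB : ∀ y ∈ Metric.ball x r, ‖iteratedFDeriv ℝ 3 f y‖ ≤ B)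
    (c : ℝ) (hc : 0 < c) (hcr : c * Real.sqrt n < r) :
    ‖((2 : ℝ) ^ n)⁻¹ •
        (∑ ε : Fin n → Bool,
          ((f (x + c • pmE n ε) - f (x - c • pmE n ε)) / (2 * c)) • pmE n ε)
      - gradient f x‖ ≤ B * n ^ 2 / 6 * c ^ 2 := by
  set e : (Fin n → Bool) → ℝ := fun ε =>
    (f (x + c • pmE n ε) - f (x - c • pmE n ε)) / (2 * c) - ⟪gradient f x, pmE n ε⟫_ℝ
  have he : ∀ ε, |e ε| ≤ B / 6 * c ^ 2 * √n ^ 3 := fun ε => by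
    simpa [e, norm_pmE] using
      abs_central_difference_sub_fderiv_le hf hB hc (v := pmE n ε) (by rwa [norm_pmE])
  have hsplit : ((2 : ℝ) ^ n)⁻¹ • (∑ ε : Fin n → Bool,
        ((f (x + c • pmE n ε) - f (x - c • pmE n ε)) / (2 * c)) • pmE n ε) - gradient f x
      = ((2 : ℝ) ^ n)⁻¹ • ∑ ε : Fin n → Bool, e ε • pmE n ε := by
    conv_lhs => rw [← inv_two_pow_smul_sum_inner_smul_pmE n (gradient f x)]
    simp only [e, sub_smul, Finset.sum_sub_distrib, smul_sub]
  have hsq : √n * √n = (n : ℝ) := Real.mul_self_sqrt n.cast_nonneg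
  rw [hsplit]
  calc _ ≤ B / 6 * c ^ 2 * √n ^ 3 * √n := norm_inv_two_pow_smul_sum_smul_pmE_le he
    _ = B * n ^ 2 / 6 * c ^ 2 := by linear_combination (B / 6 * c ^ 2 * (√n * √n + n)) * hsq

/-- Deterministic core of Lemma 2 of the paper: if `f` is three times
continuously differentiable on the ball `B(x, r)` with third derivative bounded
in operator norm by `B` there, then for every `0 < c` with `c√n < r` the
average over all `ξ ∈ {-1,1}^n` of the SPSA estimate
`[(f(x+cξ) − f(x−cξ))/(2c)]·ξ` differs from the gradient `∇f(x)` by at most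
`(B n²/6) c²` in Euclidean norm; in particular the bias is `O(c²)`. -/
theorem spsa_estimate_bias_bound
    (n : ℕ) (f : EuclideanSpace ℝ (Fin n) → ℝ)
    (x : EuclideanSpace ℝ (Fin n)) (r B : ℝ) (hr : 0 < r)
    (hf : ContDiffOn ℝ 3 f (Metric.ball x r))
    (hB : ∀ y ∈ Metric.ball x r, ‖iteratedFDeriv ℝ 3 f y‖ ≤ B)
    (c : ℝ) (hc : 0 < c) (hcr : c * Real.sqrt n < r) :
    ‖((2 : ℝ) ^ n)⁻¹ •
        (∑ ε : Fin n → Bool,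
          ((f (x + c • pmE n ε) - f (x - c • pmE n ε)) / (2 * c)) • pmE n ε)
      - gradient f x‖ ≤ B * n ^ 2 / 6 * c ^ 2 :=
  spsa_estimate_bias_bound_general n f x r B hf hB c hc hcr
end
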